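/- Fix t > 0, λ1, λ2 > 0 and c1 ≥ c2 > 0, and write f1 = f^{ac}_{λ1,c1}, f2 = f^{ac}_{λ2,c2}. For every r with c2·t < r ≤ c1·t, the double integral of f1(ξ)·f2(ζ) over the region {(ξ, ζ) : ξ + ζ ≤ r, 0 < ξ < c1t, 0 < ζ < c2t} equals 1 − e^{−λ2t} − (λ2/c2)·e^{−(λ1+λ2)t} · ∫₀^{c2t} ζ·(c2²t² − ζ²)^{−1/2} · exp((λ2/c2)·√(c2²t² − ζ²)) · exp((λ1/c1)·√(c1²t² − (r − ζ)²)) dζ. -/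
import Mathlib


open MeasureTheory ProbabilityTheory

/-- Density of the absolutely continuous part of the law of the distance from
the origin of a planar Markov random flight with speed `c` and rate `lam` at time `t`. -/
noncomputable def fac (t lam c z : ℝ) : ℝ :=
  if 0 < z ∧ z < c * t then
    (lam / c) * z / Real.sqrt (c ^ 2 * t ^ 2 - z ^ 2) *
      Real.exp (-(lam * t) + (lam / c) * Real.sqrt (c ^ 2 * t ^ 2 - z ^ 2))
  else 0

open Set

lemma fac_nonneg (t lam c z : ℝ) (hl : 0 ≤ lam) (hc : 0 ≤ c) : 0 ≤ fac t lam c z := by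
  unfold fac
  split
  · rename_i h
    have h1 : 0 ≤ z := h.1.le
    positivity
  · exact le_refl 0

lemma fac_measurable (t lam c : ℝ) : Measurable (fac t lam c) := by
  unfold fac
  refine Measurable.ite (measurableSet_Ioo (a := 0) (b := c * t)) ?_ measurable_const
  fun_prop

lemma fac_integrableOn (t lam c : ℝ) (ht : 0 < t) (hl : 0 < lam) (hc : 0 < c) :
    IntegrableOn (fac t lam c) (Ioc 0 (c * t)) := by
  have hct : 0 < c * t := mul_pos hc ht
  have hbd : IntegrableOn (fun x => (lam / c * Real.sqrt (c * t)) * (c * t - x) ^ (-(1/2) : ℝ))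
      (Ioc 0 (c * t)) := by
    have h0 : IntervalIntegrable (fun x : ℝ => x ^ (-(1/2) : ℝ)) volume 0 (c * t) :=
      intervalIntegral.intervalIntegrable_rpow' (by norm_num)
    have h1 := (h0.comp_sub_left (c * t)).symm
    simp only [sub_zero, sub_self] at h1
    exact ((h1.const_mul (lam / c * Real.sqrt (c * t)))).1
  refine hbd.integrable.mono' ((fac_measurable t lam c).aestronglyMeasurable) ?_
  rw [ae_restrict_iff' measurableSet_Ioc]
  filter_upwards with x hx
  rcases hx with ⟨hx0, hx1⟩
  rw [Real.norm_of_nonneg (fac_nonneg _ _ _ _ hl.le hc.le)]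
  rcases eq_or_lt_of_le hx1 with h | h
  · rw [fac, if_neg (by rw [h]; exact fun h' => lt_irrefl _ h'.2)]
    have : (c * t - x : ℝ) = 0 := by rw [h]; ring
    rw [this, Real.zero_rpow (by norm_num)]
    positivity
  · rw [fac, if_pos ⟨hx0, h⟩]
    have hA : 0 < c ^ 2 * t ^ 2 - x ^ 2 := by nlinarith
    set s := Real.sqrt (c ^ 2 * t ^ 2 - x ^ 2) with hs
    have hspos : 0 < s := Real.sqrt_pos.2 hA
    have hexp : Real.exp (-(lam * t) + lam / c * s) ≤ 1 := by
      rw [Real.exp_le_one_iff]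
      have hsle : s ≤ c * t := by
        rw [hs]
        calc Real.sqrt (c^2*t^2 - x^2) ≤ Real.sqrt ((c*t)^2) :=
              Real.sqrt_le_sqrt (by nlinarith)
          _ = c * t := Real.sqrt_sq hct.le
      have : lam / c * s ≤ lam / c * (c * t) := by
        apply mul_le_mul_of_nonneg_left hsle (by positivity)
      have h2 : lam / c * (c * t) = lam * t := by field_simp
      linarith [h2 ▸ this]
    have hsge : Real.sqrt (c * t - x) * Real.sqrt (c * t) ≤ s := by
      rw [hs, ← Real.sqrt_mul (by linarith)]
      exact Real.sqrt_le_sqrt (by nlinarith)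
    have hkey : lam / c * x / s ≤ lam / c * Real.sqrt (c * t) * (c * t - x) ^ (-(1/2) : ℝ) := by
      have hrp : (c * t - x) ^ (-(1/2) : ℝ) = (Real.sqrt (c * t - x))⁻¹ := by
        rw [Real.rpow_neg (by linarith), Real.sqrt_eq_rpow]
      rw [hrp]
      have hct1 : 0 < Real.sqrt (c * t - x) := Real.sqrt_pos.2 (by linarith)
      have hct2 : 0 < Real.sqrt (c * t) := Real.sqrt_pos.2 hct
      rw [div_le_iff₀ hspos]
      have hexpand : lam / c * Real.sqrt (c * t) * (Real.sqrt (c * t - x))⁻¹ *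
          (Real.sqrt (c * t - x) * Real.sqrt (c * t)) = lam / c * (c * t) := by
        have e1 : lam / c * Real.sqrt (c * t) * (Real.sqrt (c * t - x))⁻¹ *
            (Real.sqrt (c * t - x) * Real.sqrt (c * t))
            = lam / c * (Real.sqrt (c * t) * Real.sqrt (c * t)) *
              ((Real.sqrt (c * t - x))⁻¹ * Real.sqrt (c * t - x)) := by ring
        rw [e1, Real.mul_self_sqrt hct.le, inv_mul_cancel₀ hct1.ne', mul_one]
      calc lam / c * x ≤ lam / c * (c * t) := by
            apply mul_le_mul_of_nonneg_left (by linarith) (by positivity)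
        _ = lam / c * Real.sqrt (c * t) * (Real.sqrt (c * t - x))⁻¹ *
              (Real.sqrt (c * t - x) * Real.sqrt (c * t)) := hexpand.symm
        _ ≤ _ := by
            apply mul_le_mul_of_nonneg_left hsge (by positivity)
    calc lam / c * x / s * Real.exp (-(lam * t) + lam / c * s)
        ≤ lam / c * x / s * 1 := by
          apply mul_le_mul_of_nonneg_left hexp (by positivity)
      _ = lam / c * x / s := mul_one _
      _ ≤ _ := hkey

lemma fac_integral (t lam c : ℝ) (ht : 0 < t) (hl : 0 < lam) (hc : 0 < c) {b : ℝ}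
    (hb0 : 0 ≤ b) (hb : b ≤ c * t) :
    ∫ x in (0:ℝ)..b, fac t lam c x
      = 1 - Real.exp (-(lam * t) + lam / c * Real.sqrt (c ^ 2 * t ^ 2 - b ^ 2)) := by
  have hct : 0 < c * t := mul_pos hc ht
  set F : ℝ → ℝ := fun x => -Real.exp (-(lam * t) + lam / c * Real.sqrt (c ^ 2 * t ^ 2 - x ^ 2))
    with hF
  have hcont : ContinuousOn F (Icc 0 b) := by
    apply Continuous.continuousOn
    fun_prop
  have hderiv : ∀ x ∈ Ioo 0 b, HasDerivWithinAt F (fac t lam c x) (Ioi x) x := by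
    intro x hx
    have hxct : x < c * t := lt_of_lt_of_le hx.2 hb
    have hA : 0 < c ^ 2 * t ^ 2 - x ^ 2 := by nlinarith [hx.1, hx.2]
    have h1 : HasDerivAt (fun y : ℝ => c ^ 2 * t ^ 2 - y ^ 2) (-(2 * x)) x := by
      simpa using ((hasDerivAt_pow 2 x).const_sub (c ^ 2 * t ^ 2))
    have h2 := h1.sqrt hA.ne'
    have h3 := (h2.const_mul (lam / c)).const_add (-(lam * t))
    have h4 := h3.exp.neg
    have hsp : 0 < Real.sqrt (c ^ 2 * t ^ 2 - x ^ 2) := Real.sqrt_pos.2 hA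
    have heq : -(Real.exp (-(lam * t) + lam / c * Real.sqrt (c ^ 2 * t ^ 2 - x ^ 2)) *
          (lam / c * (-(2 * x) / (2 * Real.sqrt (c ^ 2 * t ^ 2 - x ^ 2)))))
        = fac t lam c x := by
      rw [fac, if_pos ⟨hx.1, hxct⟩]
      field_simp
    exact (heq ▸ h4).hasDerivWithinAt
  have hint : IntervalIntegrable (fac t lam c) volume 0 b := by
    rw [intervalIntegrable_iff_integrableOn_Ioc_of_le hb0]
    exact (fac_integrableOn t lam c ht hl hc).mono_set (Ioc_subset_Ioc_right hb)
  rw [intervalIntegral.integral_eq_sub_of_hasDeriv_right_of_le hb0 hcont hderiv hint]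
  have h0 : F 0 = -1 := by
    rw [hF]
    simp only [ne_eq, OfNat.ofNat_ne_zero, not_false_eq_true, zero_pow, sub_zero]
    rw [show c ^ 2 * t ^ 2 = (c * t) ^ 2 by ring, Real.sqrt_sq hct.le,
      show -(lam * t) + lam / c * (c * t) = 0 by field_simp; ring, Real.exp_zero]
  rw [h0, hF]
  ring

lemma fac_integrable (t lam c : ℝ) (ht : 0 < t) (hl : 0 < lam) (hc : 0 < c) :
    Integrable (fac t lam c) := by
  have h1 : fac t lam c = (Ioc (0:ℝ) (c * t)).indicator (fac t lam c) := by
    funext z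
    by_cases hz : z ∈ Ioc (0:ℝ) (c * t)
    · rw [indicator_of_mem hz]
    · rw [indicator_of_notMem hz, fac, if_neg]
      intro h
      exact hz ⟨h.1, h.2.le⟩
  rw [h1, integrable_indicator_iff measurableSet_Ioc]
  exact fac_integrableOn t lam c ht hl hc

theorem double_integral_I1_middle_r (t l1 l2 c1 c2 r : ℝ) (ht : 0 < t) (hl1 : 0 < l1) (hl2 : 0 < l2)
    (hc2 : 0 < c2) (hc12 : c2 ≤ c1) (hr0 : c2 * t < r) (hr : r ≤ c1 * t) :
    (∫ p in {p : ℝ × ℝ | p.1 + p.2 ≤ r ∧ 0 < p.1 ∧ p.1 < c1 * t ∧ 0 < p.2 ∧ p.2 < c2 * t},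
        fac t l1 c1 p.1 * fac t l2 c2 p.2)
      = 1 - Real.exp (-(l2 * t))
        - (l2 / c2) * Real.exp (-((l1 + l2) * t)) *
            (∫ ζ in (0:ℝ)..(c2 * t),
            ζ / Real.sqrt (c2 ^ 2 * t ^ 2 - ζ ^ 2) *
              Real.exp ((l2 / c2) * Real.sqrt (c2 ^ 2 * t ^ 2 - ζ ^ 2)) *
              Real.exp ((l1 / c1) * Real.sqrt (c1 ^ 2 * t ^ 2 - (r - ζ) ^ 2))) := by
  have hc1 : 0 < c1 := lt_of_lt_of_le hc2 hc12
  have hc2t : 0 < c2 * t := mul_pos hc2 ht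
  set S : Set (ℝ × ℝ) :=
    {p : ℝ × ℝ | p.1 + p.2 ≤ r ∧ 0 < p.1 ∧ p.1 < c1 * t ∧ 0 < p.2 ∧ p.2 < c2 * t} with hS
  set G : ℝ × ℝ → ℝ := fun p => fac t l1 c1 p.1 * fac t l2 c2 p.2 with hG
  have hSm : MeasurableSet S := by
    have : S = {p : ℝ × ℝ | p.1 + p.2 ≤ r} ∩ (Ioo 0 (c1 * t) ×ˢ Ioo 0 (c2 * t)) := by
      ext p
      simp only [hS, mem_setOf_eq, mem_inter_iff, mem_prod, mem_Ioo]
      tauto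
    rw [this]
    exact ((isClosed_le (by fun_prop) continuous_const).measurableSet).inter
      (measurableSet_Ioo.prod measurableSet_Ioo)
  have h1 : Integrable (fac t l1 c1) := fac_integrable t l1 c1 ht hl1 hc1
  have h2 : Integrable (fac t l2 c2) := fac_integrable t l2 c2 ht hl2 hc2
  -- step 1: Fubini
  have hGint : Integrable (S.indicator G) := ((h1.mul_prod h2).indicator hSm)
  have step1 : (∫ p in S, G p) = ∫ ζ, ∫ ξ, S.indicator G (ξ, ζ) := by
    rw [← integral_indicator hSm]
    rw [MeasureTheory.Measure.volume_eq_prod] at hGint ⊢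
    exact MeasureTheory.integral_prod_symm _ hGint
  -- step 2: inner integral
  set E : ℝ → ℝ := fun ζ =>
    Real.exp (-(l1 * t) + l1 / c1 * Real.sqrt (c1 ^ 2 * t ^ 2 - (r - ζ) ^ 2)) with hE
  have step2 : (fun ζ => ∫ ξ, S.indicator G (ξ, ζ))
      = (Ioo (0:ℝ) (c2 * t)).indicator (fun ζ => fac t l2 c2 ζ * (1 - E ζ)) := by
    funext ζ
    by_cases hζ : ζ ∈ Ioo (0:ℝ) (c2 * t)
    · rw [indicator_of_mem hζ]
      have hrz0 : 0 ≤ r - ζ := by linarith [hζ.2]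
      have hrz1 : r - ζ ≤ c1 * t := by linarith [hζ.1]
      have hsec : ∀ ξ, S.indicator G (ξ, ζ)
          = (Ioc (0:ℝ) (r - ζ)).indicator (fac t l1 c1) ξ * fac t l2 c2 ζ := by
        intro ξ
        by_cases hξ : ξ ∈ Ioc (0:ℝ) (r - ζ)
        · rw [indicator_of_mem hξ, indicator_of_mem]
          exact ⟨by linarith [hξ.2], hξ.1, by linarith [hξ.2, hζ.1], hζ.1, hζ.2⟩
        · rw [indicator_of_notMem hξ, indicator_of_notMem, zero_mul]
          intro hmem
          exact hξ ⟨hmem.2.1, by linarith [hmem.1]⟩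
      simp_rw [hsec]
      rw [integral_mul_const, integral_indicator measurableSet_Ioc,
        ← intervalIntegral.integral_of_le hrz0,
        fac_integral t l1 c1 ht hl1 hc1 hrz0 hrz1, mul_comm]
    · rw [indicator_of_notMem hζ]
      have : ∀ ξ, S.indicator G (ξ, ζ) = 0 := by
        intro ξ
        apply indicator_of_notMem
        intro hmem
        exact hζ ⟨hmem.2.2.2.1, hmem.2.2.2.2⟩
      simp_rw [this, integral_zero]
  -- step 3
  have hE1 : ∀ ζ, E ζ ≤ 1 := by
    intro ζ
    rw [hE, Real.exp_le_one_iff]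
    have hsle : Real.sqrt (c1 ^ 2 * t ^ 2 - (r - ζ) ^ 2) ≤ c1 * t :=
      calc Real.sqrt (c1 ^ 2 * t ^ 2 - (r - ζ) ^ 2) ≤ Real.sqrt ((c1 * t) ^ 2) :=
            Real.sqrt_le_sqrt (by nlinarith [sq_nonneg (r - ζ)])
        _ = c1 * t := Real.sqrt_sq (by positivity)
    have := mul_le_mul_of_nonneg_left hsle (le_of_lt (div_pos hl1 hc1))
    have h2 : l1 / c1 * (c1 * t) = l1 * t := by field_simp
    linarith [h2 ▸ this]
  have hE0 : ∀ ζ, 0 ≤ E ζ := fun ζ => (Real.exp_pos _).le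
  have hf2Ioo : IntegrableOn (fac t l2 c2) (Ioo 0 (c2 * t)) :=
    (fac_integrableOn t l2 c2 ht hl2 hc2).mono_set Ioo_subset_Ioc_self
  have hf2E : IntegrableOn (fun ζ => fac t l2 c2 ζ * E ζ) (Ioo 0 (c2 * t)) := by
    apply hf2Ioo.integrable.mono'
    · exact ((fac_measurable t l2 c2).mul (by fun_prop : Measurable E)).aestronglyMeasurable
    · filter_upwards with ζ
      rw [Real.norm_of_nonneg (mul_nonneg (fac_nonneg _ _ _ _ hl2.le hc2.le) (hE0 ζ))]
      calc fac t l2 c2 ζ * E ζ ≤ fac t l2 c2 ζ * 1 :=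
            mul_le_mul_of_nonneg_left (hE1 ζ) (fac_nonneg _ _ _ _ hl2.le hc2.le)
        _ = fac t l2 c2 ζ := mul_one _
  rw [step1, step2, integral_indicator measurableSet_Ioo]
  simp_rw [mul_one_sub]
  rw [integral_sub hf2Ioo hf2E]
  -- first integral
  have hfirst : (∫ ζ in Ioo (0:ℝ) (c2 * t), fac t l2 c2 ζ) = 1 - Real.exp (-(l2 * t)) := by
    rw [← integral_Ioc_eq_integral_Ioo, ← intervalIntegral.integral_of_le hc2t.le,
      fac_integral t l2 c2 ht hl2 hc2 hc2t.le le_rfl]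
    rw [show c2 ^ 2 * t ^ 2 - (c2 * t) ^ 2 = 0 by ring, Real.sqrt_zero, mul_zero, add_zero]
  -- second integral
  have hsecond : (∫ ζ in Ioo (0:ℝ) (c2 * t), fac t l2 c2 ζ * E ζ)
      = (l2 / c2) * Real.exp (-((l1 + l2) * t)) *
          (∫ ζ in (0:ℝ)..(c2 * t),
            ζ / Real.sqrt (c2 ^ 2 * t ^ 2 - ζ ^ 2) *
              Real.exp ((l2 / c2) * Real.sqrt (c2 ^ 2 * t ^ 2 - ζ ^ 2)) *
              Real.exp ((l1 / c1) * Real.sqrt (c1 ^ 2 * t ^ 2 - (r - ζ) ^ 2))) := by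
    rw [intervalIntegral.integral_of_le hc2t.le, integral_Ioc_eq_integral_Ioo, ← MeasureTheory.integral_const_mul]
    apply setIntegral_congr_fun measurableSet_Ioo
    intro ζ hζ
    have hfe : fac t l2 c2 ζ = (l2 / c2) * ζ / Real.sqrt (c2 ^ 2 * t ^ 2 - ζ ^ 2) *
        Real.exp (-(l2 * t) + (l2 / c2) * Real.sqrt (c2 ^ 2 * t ^ 2 - ζ ^ 2)) :=
      if_pos ⟨hζ.1, hζ.2⟩
    simp only [hE]
    rw [hfe]
    rw [Real.exp_add, Real.exp_add,
      show -((l1 + l2) * t) = -(l1 * t) + -(l2 * t) by ring, Real.exp_add]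
    ring
  rw [hfirst, hsecond]
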